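/- arXiv:1709.05672 — 2 statements merged into one kernel-verified Lean document; each statement's English description precedes it below -/
import Mathlib

section
/- Let Z = x + N with E[N] = 0 and E[N²] = σ². The function (a,b) ↦ E[L̃(Z,(a,b);σ²)] - σ² = E[(x - (aZ+b))²] equals ((1-a)x - b)² + a²σ² and attains its minimum value over (a,b) ∈ ℝ² equal to 0 (at a = 0, b = x). In particular, minimizing the expected estimated loss over affine maps is equivalent to minimizing the true expected squared error. -/
open MeasureTheory ProbabilityTheory

theorem stmt5 {Ω : Type*} [MeasurableSpace Ω] (μ : Measure Ω) [IsProbabilityMeasure μ]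
    (N : Ω → ℝ) (x σ2 : ℝ)
    (hN : Integrable N μ) (hN2 : Integrable (fun ω => (N ω) ^ 2) μ)
    (hmean : ∫ ω, N ω ∂μ = 0) (hvar : ∫ ω, (N ω) ^ 2 ∂μ = σ2) :
    (∀ a b : ℝ,
      (∫ ω, (((x + N ω) - (a * (x + N ω) + b)) ^ 2 + 2 * a * σ2) ∂μ) - σ2
        = ∫ ω, (x - (a * (x + N ω) + b)) ^ 2 ∂μ) ∧
    (∀ a b : ℝ, ∫ ω, (x - (a * (x + N ω) + b)) ^ 2 ∂μ
        = ((1 - a) * x - b) ^ 2 + a ^ 2 * σ2) ∧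
    (∀ a b : ℝ, 0 ≤ ((1 - a) * x - b) ^ 2 + a ^ 2 * σ2) ∧
    (((1 - (0:ℝ)) * x - x) ^ 2 + (0:ℝ) ^ 2 * σ2 = 0) := by
  have hσ : 0 ≤ σ2 := hvar ▸ integral_nonneg fun ω => sq_nonneg _
  have intkey : ∀ c d : ℝ, Integrable (fun ω => (c + d * N ω) ^ 2) μ := by
    intro c d
    have heq : (fun ω => (c + d * N ω) ^ 2)
        = fun ω => c ^ 2 + ((2 * c * d) * N ω + d ^ 2 * N ω ^ 2) := by funext ω; ring
    rw [heq]
    exact (integrable_const _).add ((hN.const_mul _).add (hN2.const_mul _))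
  have key : ∀ c d : ℝ, ∫ ω, (c + d * N ω) ^ 2 ∂μ = c ^ 2 + d ^ 2 * σ2 := by
    intro c d
    have h1 : Integrable (fun ω => (2 * c * d) * N ω) μ := hN.const_mul _
    have h2 : Integrable (fun ω => d ^ 2 * N ω ^ 2) μ := hN2.const_mul _
    have heq : (fun ω => (c + d * N ω) ^ 2)
        = fun ω => c ^ 2 + ((2 * c * d) * N ω + d ^ 2 * N ω ^ 2) := by funext ω; ring
    rw [heq]
    have s1 : ∫ ω, c ^ 2 + (2 * c * d * N ω + d ^ 2 * N ω ^ 2) ∂μ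
        = (∫ _ω, c ^ 2 ∂μ) + ∫ ω, (2 * c * d * N ω + d ^ 2 * N ω ^ 2) ∂μ :=
      integral_add (integrable_const _) (h1.add h2)
    have s2 : ∫ ω, (2 * c * d * N ω + d ^ 2 * N ω ^ 2) ∂μ
        = (∫ ω, 2 * c * d * N ω ∂μ) + ∫ ω, d ^ 2 * N ω ^ 2 ∂μ := integral_add h1 h2
    rw [s1, s2, integral_const, integral_const_mul, integral_const_mul, hmean, hvar]
    simp
  have key2 : ∀ a b : ℝ, ∫ ω, (x - (a * (x + N ω) + b)) ^ 2 ∂μ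
      = ((1 - a) * x - b) ^ 2 + a ^ 2 * σ2 := by
    intro a b
    have e2 : (fun ω => (x - (a * (x + N ω) + b)) ^ 2)
        = fun ω => ((1 - a) * x - b + (-a) * N ω) ^ 2 := by funext ω; ring
    rw [e2, key]; ring
  refine ⟨?_, key2, ?_, ?_⟩
  · intro a b
    have e1 : (fun ω => ((x + N ω) - (a * (x + N ω) + b)) ^ 2 + 2 * a * σ2)
        = fun ω => ((1 - a) * x - b + (1 - a) * N ω) ^ 2 + 2 * a * σ2 := by funext ω; ring
    have s1 : ∫ ω, ((1 - a) * x - b + (1 - a) * N ω) ^ 2 + 2 * a * σ2 ∂μ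
        = (∫ ω, ((1 - a) * x - b + (1 - a) * N ω) ^ 2 ∂μ) + ∫ _ω, 2 * a * σ2 ∂μ :=
      integral_add (intkey _ _) (integrable_const _)
    rw [e1, s1, key, integral_const, key2]
    simp; ring
  · intro a b; positivity
  · simp
end

section
/- Let N₁,...,Nₘ be i.i.d. with mean 0, variance σ², and finite fourth moment, Zᵢ = xᵢ + Nᵢ with deterministic xᵢ. For fixed constants a, b, the empirical average estimated loss (1/m)Σᵢ[(Zᵢ-(aZᵢ+b))² + 2aσ²] converges in probability, as m → ∞, to the limit of (1/m)Σᵢ E[(xᵢ - (aZᵢ+b))²] + σ², provided the per-pixel expectations Cesàro-converge (e.g., the sequence ((1-a)xᵢ - b)² Cesàro-converges). -/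
/-!
The summands `Yᵢ = ((1 - a) xᵢ - b + (1 - a) Nᵢ)² + 2aσ²` are independent, with means
`((1 - a) xᵢ - b)² + (1 + a²)σ²` and with variances bounded uniformly in `i` in terms of
`sup |xᵢ|` and the fourth moment of the noise. Hence the variance of their average is `O(1/m)`,
and Chebyshev's inequality gives a weak law of large numbers: the average is close in probability
to the average of the means, which converges by the Cesàro hypothesis.
-/

open MeasureTheory ProbabilityTheory Filter Finset Topology

section WeakLaw

variable {Ω : Type*} [MeasurableSpace Ω] {μ : Measure Ω}

theorem variance_average_le {Y : ℕ → Ω → ℝ} (hY : ∀ i, MemLp (Y i) 2 μ)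
    (hindep : Pairwise fun i j => IndepFun (Y i) (Y j) μ) {K : ℝ}
    (hK : ∀ i, variance (Y i) μ ≤ K) (m : ℕ) :
    variance (fun ω => (m : ℝ)⁻¹ * ∑ i ∈ range m, Y i ω) μ ≤ K / m := by
  have hsum : variance (∑ i ∈ range m, Y i) μ ≤ m * K := by
    rw [IndepFun.variance_sum (fun i _ => hY i) (fun i _ j _ hij => hindep hij)]
    simpa using sum_le_sum fun i (_ : i ∈ range m) => hK i
  simp_rw [← Finset.sum_apply]
  rw [variance_const_mul]
  rcases m.eq_zero_or_pos with rfl | hm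
  · simp
  calc ((m : ℝ)⁻¹) ^ 2 * variance (∑ i ∈ range m, Y i) μ ≤ ((m : ℝ)⁻¹) ^ 2 * (m * K) := by
        gcongr
    _ = K / m := by field_simp

variable [IsFiniteMeasure μ]

theorem tendstoInMeasure_const_of_tendsto_variance {ι : Type*} {l : Filter ι} {X : ι → Ω → ℝ}
    {L : ℝ} (hX : ∀ i, MemLp (X i) 2 μ) (hvar : Tendsto (fun i => variance (X i) μ) l (𝓝 0))
    (hmean : Tendsto (fun i => μ[X i]) l (𝓝 L)) :
    TendstoInMeasure μ X l (fun _ => L) := by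
  refine tendstoInMeasure_iff_dist.2 fun ε hε => ?_
  have hε2 : 0 < ε / 2 := half_pos hε
  have hbound : Tendsto (fun i => ENNReal.ofReal (variance (X i) μ / (ε / 2) ^ 2)) l (𝓝 0) := by
    simpa using ENNReal.tendsto_ofReal (hvar.div_const ((ε / 2) ^ 2))
  refine tendsto_of_tendsto_of_tendsto_of_le_of_le' tendsto_const_nhds hbound
    (Eventually.of_forall fun i => zero_le) ?_
  filter_upwards [hmean (Metric.ball_mem_nhds L hε2)] with i hi
  have hsub : {ω | ε ≤ dist (X i ω) L} ⊆ {ω | ε / 2 ≤ |X i ω - μ[X i]|} := by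
    intro ω hω
    simp only [Set.mem_ofPred_eq, Real.dist_eq, Set.mem_preimage, Metric.mem_ball] at hω hi ⊢
    linarith [abs_sub_le (X i ω) μ[X i] L]
  exact (measure_mono hsub).trans (meas_ge_le_variance_div_sq (hX i) hε2)

theorem tendstoInMeasure_average_of_pairwise_indepFun {Y : ℕ → Ω → ℝ}
    (hY : ∀ i, MemLp (Y i) 2 μ) (hindep : Pairwise fun i j => IndepFun (Y i) (Y j) μ) {K : ℝ}
    (hK : ∀ i, variance (Y i) μ ≤ K) {L : ℝ}
    (hmean : Tendsto (fun m : ℕ => (m : ℝ)⁻¹ * ∑ i ∈ range m, μ[Y i]) atTop (𝓝 L)) :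
    TendstoInMeasure μ (fun (m : ℕ) ω => (m : ℝ)⁻¹ * ∑ i ∈ range m, Y i ω) atTop
      (fun _ => L) := by
  refine tendstoInMeasure_const_of_tendsto_variance (fun m => ?_) ?_ ?_
  · simp_rw [← Finset.sum_apply]
    exact (memLp_finsetSum' _ fun i _ => hY i).const_mul _
  · exact tendsto_of_tendsto_of_tendsto_of_le_of_le tendsto_const_nhds
      (tendsto_const_div_atTop_nhds_zero_nat K) (fun m => variance_nonneg _ _)
      (variance_average_le hY hindep hK)
  · simpa only [integral_const_mul, integral_finsetSum _ fun i _ => (hY i).integrable one_le_two]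
      using hmean

end WeakLaw

section SquaredAffine

variable {Ω : Type*} [MeasurableSpace Ω] {μ : Measure Ω} {X : Ω → ℝ}

theorem memLp_of_integrable_pow {n : ℕ} (hn : n ≠ 0) (heven : Even n)
    (hX : AEStronglyMeasurable X μ) (h : Integrable (fun ω => X ω ^ n) μ) : MemLp X n μ :=
  (integrable_norm_rpow_iff hX (by simpa using hn) (by simp)).1 (by simpa [heven.pow_abs] using h)

theorem memLp_two_sq_affine [IsFiniteMeasure μ] (hX : MemLp X 4 μ) (w d e : ℝ) :
    MemLp (fun ω => (w + d * X ω) ^ 2 + e) 2 μ := by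
  have : ENNReal.HolderTriple 4 4 2 := ⟨by
    rw [show (4 : ENNReal) = 2 * 2 by norm_num, ENNReal.mul_inv (by simp) (by simp), ← two_mul,
      ← mul_assoc, ENNReal.mul_inv_cancel (by simp) (by simp), one_mul]⟩
  have hY : MemLp (fun ω => w + d * X ω) 4 μ := (memLp_const w).add (hX.const_mul d)
  simpa only [sq, Pi.add_def] using (hY.mul' hY).add (memLp_const e)

variable [IsProbabilityMeasure μ]

theorem integral_sq_affine (hX : MemLp X 2 μ) (w d e : ℝ) :
    ∫ ω, (w + d * X ω) ^ 2 + e ∂μ = w ^ 2 + 2 * w * d * μ[X] + d ^ 2 * ∫ ω, X ω ^ 2 ∂μ + e := by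
  have h1 : Integrable (fun ω => 2 * w * d * X ω) μ := (hX.integrable one_le_two).const_mul _
  have h2 : Integrable (fun ω => d ^ 2 * X ω ^ 2) μ := hX.integrable_sq.const_mul _
  have h12 : Integrable (fun ω => 2 * w * d * X ω + d ^ 2 * X ω ^ 2) μ := h1.add h2
  calc ∫ ω, (w + d * X ω) ^ 2 + e ∂μ
      = ∫ ω, (w ^ 2 + e) + (2 * w * d * X ω + d ^ 2 * X ω ^ 2) ∂μ := by
        congr with ω; ring
    _ = w ^ 2 + 2 * w * d * μ[X] + d ^ 2 * ∫ ω, X ω ^ 2 ∂μ + e := by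
        rw [integral_add (integrable_const _) h12, integral_add h1 h2, integral_const,
          integral_const_mul, integral_const_mul]
        simp only [probReal_univ, one_smul]
        ring

theorem variance_sq_affine_le (hX : MemLp X 4 μ) (w d e : ℝ) :
    variance (fun ω => (w + d * X ω) ^ 2 + e) μ
      ≤ 8 * w ^ 2 * d ^ 2 * ∫ ω, X ω ^ 2 ∂μ + 2 * d ^ 4 * ∫ ω, X ω ^ 4 ∂μ := by
  set U : Ω → ℝ := fun ω => 2 * w * d * X ω + d ^ 2 * X ω ^ 2
  have hU : AEStronglyMeasurable U μ := by
    have := hX.aestronglyMeasurable; fun_prop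
  have hX2 : Integrable (fun ω => X ω ^ 2) μ := (hX.mono_exponent (by norm_num)).integrable_sq
  have hX4 : Integrable (fun ω => X ω ^ 4) μ := by
    simpa [Even.pow_abs (by decide : Even 4)] using hX.integrable_norm_pow (p := 4) (by norm_num)
  calc variance (fun ω => (w + d * X ω) ^ 2 + e) μ = variance (fun ω => U ω + (w ^ 2 + e)) μ := by
        congr with ω; ring
    _ = variance U μ := variance_add_const hU _
    _ ≤ ∫ ω, U ω ^ 2 ∂μ := variance_le_expectation_sq hU
    _ ≤ ∫ ω, 8 * w ^ 2 * d ^ 2 * X ω ^ 2 + 2 * d ^ 4 * X ω ^ 4 ∂μ := by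
        refine integral_mono_of_nonneg (ae_of_all _ fun ω => sq_nonneg _)
          ((hX2.const_mul _).add (hX4.const_mul _)) (ae_of_all _ fun ω => ?_)
        -- `(p + q)² ≤ 2p² + 2q²`
        nlinarith [sq_nonneg (2 * w * d * X ω - d ^ 2 * X ω ^ 2)]
    _ = 8 * w ^ 2 * d ^ 2 * ∫ ω, X ω ^ 2 ∂μ + 2 * d ^ 4 * ∫ ω, X ω ^ 4 ∂μ := by
        rw [integral_add (hX2.const_mul _) (hX4.const_mul _), integral_const_mul,
          integral_const_mul]

end SquaredAffine

theorem Filter.Tendsto.average_add_const {u : ℕ → ℝ} {c : ℝ}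
    (hu : Tendsto (fun m : ℕ => (m : ℝ)⁻¹ * ∑ i ∈ range m, u i) atTop (𝓝 c)) (k : ℝ) :
    Tendsto (fun m : ℕ => (m : ℝ)⁻¹ * ∑ i ∈ range m, (u i + k)) atTop (𝓝 (c + k)) := by
  refine (hu.add_const k).congr' ?_
  filter_upwards [eventually_ne_atTop 0] with m hm
  rw [sum_add_distrib, sum_const, card_range, nsmul_eq_mul, mul_add,
    inv_mul_cancel_left₀ (Nat.cast_ne_zero.2 hm)]

theorem stmt17_general {Ω : Type*} [MeasurableSpace Ω] (μ : Measure Ω) [IsProbabilityMeasure μ]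
    (N : ℕ → Ω → ℝ) (x : ℕ → ℝ) (σ2 a b c : ℝ)
    (hindep : iIndepFun N μ)
    (hident : ∀ i, IdentDistrib (N i) (N 0) μ μ)
    (hmean : ∫ ω, N 0 ω ∂μ = 0)
    (hvar : ∫ ω, (N 0 ω) ^ 2 ∂μ = σ2)
    (h4 : Integrable (fun ω => (N 0 ω) ^ 4) μ)
    (hxbd : ∃ C, ∀ i, |x i| ≤ C)
    (hcesaro : Filter.Tendsto
      (fun m : ℕ => (m : ℝ)⁻¹ * ∑ i ∈ Finset.range m, ((1 - a) * x i - b) ^ 2)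
      Filter.atTop (nhds c)) :
    TendstoInMeasure μ
      (fun (m : ℕ) (ω : Ω) => (m : ℝ)⁻¹ * ∑ i ∈ Finset.range m,
        (((x i + N i ω) - (a * (x i + N i ω) + b)) ^ 2 + 2 * a * σ2))
      Filter.atTop
      (fun _ => c + a ^ 2 * σ2 + σ2) := by
  obtain ⟨C, hC⟩ := hxbd
  set w : ℕ → ℝ := fun i => (1 - a) * x i - b
  set W := |1 - a| * C + |b|
  have hw : ∀ i, w i ^ 2 ≤ W ^ 2 := fun i => by
    rw [← sq_abs]
    refine pow_le_pow_left₀ (abs_nonneg _) ?_ 2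
    calc |(1 - a) * x i - b| ≤ |(1 - a) * x i| + |b| := abs_sub _ _
      _ ≤ |1 - a| * C + |b| := by rw [abs_mul]; gcongr; exact hC i
  have hNLp : ∀ i, MemLp (N i) 4 μ := fun i => (hident i).memLp_iff.2 <|
    memLp_of_integrable_pow (n := 4) (by norm_num) (by decide)
      (hident 0).aestronglyMeasurable_fst h4
  have hN1 : ∀ i, μ[N i] = 0 := fun i => (hident i).integral_eq.trans hmean
  have hN2 : ∀ i, ∫ ω, N i ω ^ 2 ∂μ = σ2 := fun i => (hident i).sq.integral_eq.trans hvar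
  have hN4 : ∀ i, ∫ ω, N i ω ^ 4 ∂μ = ∫ ω, N 0 ω ^ 4 ∂μ := fun i => (hident i).pow.integral_eq
  have hY : ∀ i ω, ((x i + N i ω) - (a * (x i + N i ω) + b)) ^ 2 + 2 * a * σ2
      = (w i + (1 - a) * N i ω) ^ 2 + 2 * a * σ2 := fun i ω => by ring
  simp_rw [hY]
  refine tendstoInMeasure_average_of_pairwise_indepFun
    (K := 8 * W ^ 2 * (1 - a) ^ 2 * σ2 + 2 * (1 - a) ^ 4 * ∫ ω, N 0 ω ^ 4 ∂μ)
    (fun i => memLp_two_sq_affine (hNLp i) _ _ _) (fun i j hij => ?_) (fun i => ?_) ?_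
  · have hg : ∀ i, Measurable fun t : ℝ => (w i + (1 - a) * t) ^ 2 + 2 * a * σ2 := fun i => by
      fun_prop
    exact (hindep.indepFun hij).comp (hg i) (hg j)
  · have hσ2 : 0 ≤ σ2 := hvar ▸ integral_nonneg fun ω => sq_nonneg _
    refine (variance_sq_affine_le (hNLp i) _ _ _).trans ?_
    rw [hN2, hN4]
    gcongr 8 * ?_ * _ * _ + _
    exact hw i
  · have hmeanY := fun i => integral_sq_affine ((hNLp i).mono_exponent (by norm_num)) (w i) (1 - a)
      (2 * a * σ2)
    simp only [hmeanY, hN1, hN2, mul_zero, add_zero, add_assoc]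
    convert hcesaro.average_add_const ((1 - a) ^ 2 * σ2 + 2 * a * σ2) using 2
    ring

theorem stmt17 {Ω : Type*} [MeasurableSpace Ω] (μ : Measure Ω) [IsProbabilityMeasure μ]
    (N : ℕ → Ω → ℝ) (x : ℕ → ℝ) (σ2 a b c : ℝ)
    (hmeas : ∀ i, Measurable (N i))
    (hindep : iIndepFun N μ)
    (hident : ∀ i, IdentDistrib (N i) (N 0) μ μ)
    (hmean : ∫ ω, N 0 ω ∂μ = 0)
    (hvar : ∫ ω, (N 0 ω) ^ 2 ∂μ = σ2)
    (h4 : Integrable (fun ω => (N 0 ω) ^ 4) μ)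
    (hxbd : ∃ C, ∀ i, |x i| ≤ C)
    (hcesaro : Filter.Tendsto
      (fun m : ℕ => (m : ℝ)⁻¹ * ∑ i ∈ Finset.range m, ((1 - a) * x i - b) ^ 2)
      Filter.atTop (nhds c)) :
    TendstoInMeasure μ
      (fun (m : ℕ) (ω : Ω) => (m : ℝ)⁻¹ * ∑ i ∈ Finset.range m,
        (((x i + N i ω) - (a * (x i + N i ω) + b)) ^ 2 + 2 * a * σ2))
      Filter.atTop
      (fun _ => c + a ^ 2 * σ2 + σ2) :=
  stmt17_general μ N x σ2 a b c hindep hident hmean hvar h4 hxbd hcesaro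
end
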